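/- Let A = a₀ + 𝐚 + 𝒜 + a₁₂₃I be a multivector in Cl(3,0), and let a₊, a₋ be real numbers with a₊ ≥ 0, a₊² - a₋² = s, a₊·a₋ = w, and (a₊, a₋) ≠ (0, 0). Then for any integers c₁, c₂, the free multivector F = (2πc₁/(a₊² + a₋²))·(a₋·(𝐚 + 𝒜) + a₊·(𝐚 + 𝒜)·I) + 2πc₂·I satisfies exp F = 1. -/

import Mathlib

open Real CliffordAlgebra

noncomputable section

/-- The quadratic form of signature (3,0): `Q(x) = x₁² + x₂² + x₃²`. -/
def Q30 : QuadraticForm ℝ (Fin 3 → ℝ) := QuadraticMap.weightedSumSquares ℝ ![1, 1, 1]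

/-- The real Clifford algebra Cl(3,0). -/
abbrev Cl30 := CliffordAlgebra Q30

/-- The canonical (module) topology on the finite-dimensional real algebra Cl(3,0). -/
instance : TopologicalSpace Cl30 := moduleTopology ℝ Cl30

/-- The orthonormal generators `e₁, e₂, e₃` (indexed here by `0, 1, 2`). -/
def e (i : Fin 3) : Cl30 := ι Q30 (Pi.single i 1)

/-- The pseudoscalar `I = e₁e₂e₃`. -/
def I3 : Cl30 := e 0 * e 1 * e 2

/-- The exponential `exp M = ∑ₖ Mᵏ/k!` in Cl(3,0). -/
def expCl (M : Cl30) : Cl30 := ∑' n : ℕ, (n.factorial : ℝ)⁻¹ • M ^ n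

/-- `atan2 y x` is the argument in `(-π, π]` of the complex number `x + iy`. -/
def atan2 (y x : ℝ) : ℝ := Complex.arg ⟨x, y⟩

-- topology infrastructure
instance : IsModuleTopology ℝ Cl30 := ⟨rfl⟩
instance : ContinuousAdd Cl30 := IsModuleTopology.toContinuousAdd ℝ Cl30
example : ContinuousSMul ℝ Cl30 := inferInstance

instance : T2Space Cl30 := by
  apply T2Space.of_injective_continuous
    (f := fun (x : Cl30) (f : Module.Dual ℝ Cl30) => f x)
  · intro x y h
    rw [← sub_eq_zero, ← Module.forall_dual_apply_eq_zero_iff ℝ (x - y)]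
    intro φ
    have := congrFun h φ
    have := congrFun h φ
    simp only [map_sub, this, sub_self]
  · apply continuous_pi
    intro f
    exact IsModuleTopology.continuous_of_linearMap f

-- Clifford relations
lemma Q30_single (i : Fin 3) : Q30 (Pi.single i 1) = 1 := by
  simp [Q30, QuadraticMap.weightedSumSquares_apply, Pi.single_apply, Fin.sum_univ_three]
  fin_cases i <;> norm_num

lemma e_sq (i : Fin 3) : e i * e i = 1 := by
  rw [e, ι_sq_scalar, Q30_single, map_one]

lemma e_anti {i j : Fin 3} (h : i ≠ j) : e j * e i = -(e i * e j) := by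
  have h2 : e i * e j + e j * e i = algebraMap ℝ Cl30 (QuadraticMap.polar Q30 (Pi.single i 1) (Pi.single j 1)) :=
    ι_mul_ι_add_swap _ _
  have hp : QuadraticMap.polar Q30 (Pi.single i 1) (Pi.single j 1) = 0 := by
    simp [QuadraticMap.polar, Q30, QuadraticMap.weightedSumSquares_apply, Fin.sum_univ_three,
      Pi.single_apply]
    fin_cases i <;> fin_cases j <;> simp_all <;> ring
  rw [hp, map_zero] at h2
  linear_combination (norm := abel) h2

lemma e_sq' (i : Fin 3) (x : Cl30) : e i * (e i * x) = x := by
  rw [← mul_assoc, e_sq, one_mul]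

lemma h10 : e 1 * e 0 = -(e 0 * e 1) := e_anti (by decide)
lemma h20 : e 2 * e 0 = -(e 0 * e 2) := e_anti (by decide)
lemma h21 : e 2 * e 1 = -(e 1 * e 2) := e_anti (by decide)
lemma h10' (x : Cl30) : e 1 * (e 0 * x) = -(e 0 * (e 1 * x)) := by
  rw [← mul_assoc, h10, neg_mul, mul_assoc]
lemma h20' (x : Cl30) : e 2 * (e 0 * x) = -(e 0 * (e 2 * x)) := by
  rw [← mul_assoc, h20, neg_mul, mul_assoc]
lemma h21' (x : Cl30) : e 2 * (e 1 * x) = -(e 1 * (e 2 * x)) := by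
  rw [← mul_assoc, h21, neg_mul, mul_assoc]

lemma I3_sq : I3 * I3 = -1 := by
  simp only [I3, mul_assoc, e_sq, e_sq', h10, h20, h21, h10', h20', h21',
    mul_neg, neg_mul, mul_one, neg_neg]

lemma I3_comm (i : Fin 3) : e i * I3 = I3 * e i := by
  have h0 : e 0 * I3 = I3 * e 0 := by
    simp only [I3, mul_assoc, e_sq, e_sq', h10, h20, h21, h10', h20', h21',
      mul_neg, neg_mul, mul_one, neg_neg]
  have h1 : e 1 * I3 = I3 * e 1 := by
    simp only [I3, mul_assoc, e_sq, e_sq', h10, h20, h21, h10', h20', h21',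
      mul_neg, neg_mul, mul_one, neg_neg]
  have h2 : e 2 * I3 = I3 * e 2 := by
    simp only [I3, mul_assoc, e_sq, e_sq', h10, h20, h21, h10', h20', h21',
      mul_neg, neg_mul, mul_one, neg_neg]
  fin_cases i <;> [exact h0; exact h1; exact h2]

lemma B_sq (a1 a2 a3 a12 a13 a23 : ℝ) :
    let B := a1 • e 0 + a2 • e 1 + a3 • e 2 + (a12 • (e 0 * e 1) + a13 • (e 0 * e 2) + a23 • (e 1 * e 2));
    B * B = (a1^2+a2^2+a3^2-a12^2-a13^2-a23^2) • (1 : Cl30)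
      + (2*(a1*a23-a2*a13+a3*a12)) • I3 := by
  intro B
  show (_ : Cl30) = _
  simp only [B, I3, mul_add, add_mul, smul_mul_assoc, mul_smul_comm, smul_smul, mul_assoc,
    e_sq, e_sq', h10, h20, h21, h10', h20', h21', mul_neg, neg_mul, mul_one, one_mul,
    smul_neg, neg_neg]
  module

/-- Linear transport map from ℂ × ℂ to Cl30, given two elements X Y. -/
def Kmap (X Y : Cl30) : (ℂ × ℂ) →ₗ[ℝ] Cl30 where
  toFun p := ((p.1.re + p.2.re)/2) • (1:Cl30) + ((p.1.im + p.2.im)/2) • X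
      + ((p.1.im - p.2.im)/2) • Y + ((p.2.re - p.1.re)/2) • (X*Y)
  map_add' p q := by
    simp only [Prod.fst_add, Prod.snd_add, Complex.add_re, Complex.add_im]
    module
  map_smul' r p := by
    simp only [Prod.smul_fst, Prod.smul_snd, Complex.smul_re, Complex.smul_im,
      RingHom.id_apply, smul_eq_mul]
    module

lemma Kmap_cont (X Y : Cl30) : Continuous (Kmap X Y) := by
  show Continuous fun p : ℂ × ℂ => ((p.1.re + p.2.re)/2) • (1:Cl30) + ((p.1.im + p.2.im)/2) • X
      + ((p.1.im - p.2.im)/2) • Y + ((p.2.re - p.1.re)/2) • (X*Y)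
  have hre1 : Continuous fun p : ℂ × ℂ => p.1.re := Complex.continuous_re.comp continuous_fst
  have hre2 : Continuous fun p : ℂ × ℂ => p.2.re := Complex.continuous_re.comp continuous_snd
  have him1 : Continuous fun p : ℂ × ℂ => p.1.im := Complex.continuous_im.comp continuous_fst
  have him2 : Continuous fun p : ℂ × ℂ => p.2.im := Complex.continuous_im.comp continuous_snd
  exact (((((hre1.add hre2).div_const 2).smul continuous_const).add
    (((him1.add him2).div_const 2).smul continuous_const)).add
    (((him1.sub him2).div_const 2).smul continuous_const)).add
    (((hre2.sub hre1).div_const 2).smul continuous_const)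

lemma Kmap_equivariant (X Y : Cl30) (hX : X*X = -1) (hY : Y*Y = -1) (hc : Y*X = X*Y)
    (s1 s2 : ℝ) (p : ℂ × ℂ) :
    Kmap X Y ((Complex.I * s1, Complex.I * s2) * p)
      = (((s1+s2)/2) • X + ((s1-s2)/2) • Y) * Kmap X Y p := by
  have hXXY : X*(X*Y) = -Y := by rw [← mul_assoc, hX, neg_one_mul]
  have hYXY : Y*(X*Y) = -X := by
    rw [← mul_assoc, hc, mul_assoc, hY, mul_neg, mul_one]
  have hYX : Y*X = X*Y := hc
  obtain ⟨z, w⟩ := p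
  show Kmap X Y (Complex.I * s1 * z, Complex.I * s2 * w) = _
  simp only [Kmap, LinearMap.coe_mk, AddHom.coe_mk, Complex.mul_re, Complex.mul_im,
    Complex.I_re, Complex.I_im, Complex.ofReal_re, Complex.ofReal_im]
  simp only [mul_add, add_mul, smul_mul_assoc, mul_smul_comm, mul_one, one_mul,
    hX, hY, hYX, hXXY, hYXY, smul_neg, mul_neg, neg_mul]
  module

lemma exp_xi (n1 n2 : ℤ) :
    NormedSpace.exp ((Complex.I * (2*π*(n1:ℝ)), Complex.I * (2*π*(n2:ℝ))) : ℂ × ℂ) = 1 := by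
  have key : ∀ n : ℤ, NormedSpace.exp ((Complex.I * (2*π*(n:ℝ))) : ℂ) = 1 := by
    intro n
    rw [← Complex.exp_eq_exp_ℂ]
    have : (Complex.I * (2*π*(n:ℝ)) : ℂ) = n * (2 * (π:ℂ) * Complex.I) := by
      push_cast; ring
    rw [this, Complex.exp_int_mul_two_pi_mul_I]
  have h1 := Prod.fst_exp ((Complex.I * (2*π*(n1:ℝ)), Complex.I * (2*π*(n2:ℝ))) : ℂ × ℂ)
  have h2 := Prod.snd_exp ((Complex.I * (2*π*(n1:ℝ)), Complex.I * (2*π*(n2:ℝ))) : ℂ × ℂ)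
  ext
  · rw [h1]; exact key n1
  · rw [h2]; exact key n2

lemma expCl_eq_one_abstract (X Y : Cl30) (hX : X*X = -1) (hY : Y*Y = -1) (hc : Y*X = X*Y)
    (c1 c2 : ℤ) (F : Cl30) (hF : F = (2*π*(c1:ℝ)) • X + (2*π*(c2:ℝ)) • Y) : expCl F = 1 := by
  set s1 : ℝ := 2*π*((c1:ℝ)+(c2:ℝ)) with hs1
  set s2 : ℝ := 2*π*((c1:ℝ)-(c2:ℝ)) with hs2
  set ξ : ℂ × ℂ := (Complex.I * (s1:ℝ), Complex.I * (s2:ℝ)) with hξ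
  have hF' : F = ((s1+s2)/2) • X + ((s1-s2)/2) • Y := by
    rw [hF, hs1, hs2]; ring_nf
  have hKe := fun p => Kmap_equivariant X Y hX hY hc s1 s2 p
  rw [← hF'] at hKe
  have hpow : ∀ n : ℕ, Kmap X Y (ξ ^ n) = F ^ n := by
    intro n
    induction n with
    | zero =>
      simp only [pow_zero]
      show Kmap X Y ((1:ℂ), (1:ℂ)) = 1
      simp [Kmap]
    | succ n ih =>
      rw [pow_succ', pow_succ', hξ, hKe, ih]
  have hsum := NormedSpace.exp_series_hasSum_exp' (𝕂 := ℝ) ξ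
  have h2 := hsum.map (Kmap X Y).toAddMonoidHom (Kmap_cont X Y)
  have hterm : ∀ n : ℕ, (Kmap X Y).toAddMonoidHom ((((n.factorial : ℝ))⁻¹ : ℝ) • ξ ^ n)
      = ((n.factorial : ℝ))⁻¹ • F ^ n := by
    intro n
    show Kmap X Y (((n.factorial : ℝ))⁻¹ • ξ ^ n) = _
    rw [map_smul, hpow]
  have hexp : NormedSpace.exp ξ = 1 := by
    have := exp_xi (c1+c2) (c1-c2)
    rw [hξ, hs1, hs2]
    convert this using 3 <;> push_cast <;> ring
  rw [hexp] at h2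
  have hone : (Kmap X Y).toAddMonoidHom 1 = 1 := by
    show Kmap X Y ((1:ℂ), (1:ℂ)) = 1
    simp [Kmap]
  rw [hone] at h2
  have h3 : HasSum (fun n : ℕ => ((n.factorial : ℝ))⁻¹ • F ^ n) 1 :=
    h2.congr_fun (fun n => (hterm n).symm)
  exact h3.tsum_eq


/-- the free multivector `F` of Cl(3,0) satisfies `exp F = 1`. -/
theorem free_multivector_Cl30
    (a0 a1 a2 a3 a12 a13 a23 a123 ap am : ℝ) (c1 c2 : ℤ)
    (va bA A F : Cl30)
    (hva : va = a1 • e 0 + a2 • e 1 + a3 • e 2)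
    (hbA : bA = a12 • (e 0 * e 1) + a13 • (e 0 * e 2) + a23 • (e 1 * e 2))
    (hA : A = algebraMap ℝ Cl30 a0 + va + bA + a123 • I3)
    (hapnn : 0 ≤ ap)
    (hs : ap ^ 2 - am ^ 2 = a1 ^ 2 + a2 ^ 2 + a3 ^ 2 - a12 ^ 2 - a13 ^ 2 - a23 ^ 2)
    (hw : ap * am = a1 * a23 - a2 * a13 + a3 * a12)
    (hne : ¬(ap = 0 ∧ am = 0))
    (hF : F = (2 * π * c1 / (ap ^ 2 + am ^ 2)) • (am • (va + bA) + ap • ((va + bA) * I3)) +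
      (2 * π * c2) • I3) :
    expCl F = 1 := by
  have hd : ap ^ 2 + am ^ 2 ≠ 0 := by
    intro h
    exact hne ⟨by nlinarith [sq_nonneg ap, sq_nonneg am], by nlinarith [sq_nonneg ap, sq_nonneg am]⟩
  set B : Cl30 := va + bA with hBdef
  set W : Cl30 := am • B + ap • (B * I3) with hWdef
  set ν : ℝ := (ap ^ 2 + am ^ 2)⁻¹ with hν
  set X : Cl30 := ν • W with hXdef
  -- B in normal form
  have hB : B = a1 • e 0 + a2 • e 1 + a3 • e 2 +
      (a12 • (e 0 * e 1) + a13 • (e 0 * e 2) + a23 • (e 1 * e 2)) := by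
    rw [hBdef, hva, hbA]
  -- commutation of I3 with B
  have cB : Commute I3 B := by
    rw [hB]
    have c0 : Commute I3 (e 0) := (I3_comm 0).symm
    have c1' : Commute I3 (e 1) := (I3_comm 1).symm
    have c2' : Commute I3 (e 2) := (I3_comm 2).symm
    exact (((c0.smul_right a1).add_right (c1'.smul_right a2)).add_right
      (c2'.smul_right a3)).add_right
      ((((c0.mul_right c1').smul_right a12).add_right
        ((c0.mul_right c2').smul_right a13)).add_right
        ((c1'.mul_right c2').smul_right a23))
  have hcomm : B * I3 = I3 * B := cB.symm
  -- square of B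
  have hB2 : B * B = (ap ^ 2 - am ^ 2) • (1 : Cl30) + (2 * (ap * am)) • I3 := by
    rw [hB, B_sq a1 a2 a3 a12 a13 a23, ← hs, ← hw]
  -- square of W
  have h3 : B * (B * I3) = (B * B) * I3 := (mul_assoc B B I3).symm
  have h2 : (B * I3) * B = (B * B) * I3 := by
    rw [mul_assoc, ← hcomm, ← mul_assoc]
  have h1 : (B * I3) * (B * I3) = (B * B) * (I3 * I3) := by
    rw [mul_assoc, ← mul_assoc I3 B, ← hcomm, mul_assoc, ← mul_assoc, ← mul_assoc]
  have hW2 : W * W = (-(ap ^ 2 + am ^ 2) ^ 2) • (1 : Cl30) := by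
    rw [hWdef]
    simp only [add_mul, mul_add, smul_mul_assoc, mul_smul_comm, smul_smul]
    rw [h1, h2, h3, hB2, I3_sq]
    simp only [add_mul, smul_mul_assoc, one_mul, I3_sq, mul_neg, mul_one, smul_neg]
    module
  -- X is a square root of -1
  have hX : X * X = -1 := by
    rw [hXdef, smul_mul_assoc, mul_smul_comm, smul_smul, hW2, smul_smul]
    have : ν * ν * -(ap ^ 2 + am ^ 2) ^ 2 = -1 := by
      rw [hν]; field_simp
    rw [this, neg_smul, one_smul]
  have hY : I3 * I3 = -1 := I3_sq
  have cX : Commute I3 X :=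
    ((cB.smul_right am).add_right ((cB.mul_right (Commute.refl I3)).smul_right ap)).smul_right ν
  have hc : I3 * X = X * I3 := cX
  -- F in abstract form
  have hF' : F = (2 * π * (c1 : ℝ)) • X + (2 * π * (c2 : ℝ)) • I3 := by
    rw [hF, hXdef, smul_smul, hν, div_eq_mul_inv]
  exact expCl_eq_one_abstract X I3 hX hY hc c1 c2 F hF'
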